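/- Let F ∈ ℂ^{m×n} and set F̂ := [ F̄ A_F ; F − F_H ] ∈ ℂ^{2m×n} (stacked blocks), where A_F = A − BF and F_H = R_H^{-1} B^H H̄ A with R_H = R + B^H H̄ B invertible. Then Â − B̂ F̂ = Ā_F A_F, where Â = Ā A − Ā B R_H^{-1} B^H H̄ A and B̂ = [ B̄ , Ā B ]. Consequently, if ρ(Ā_F A_F) < 1, then the pair (Â, B̂) admits a stabilizing feedback. -/

import Mathlib

open Matrix
open scoped ComplexOrder

noncomputable section

/-- Entrywise complex conjugation of a matrix. -/
def mconj {k l : ℕ} (M : Matrix (Fin k) (Fin l) ℂ) : Matrix (Fin k) (Fin l) ℂ :=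
  M.map (starRingEnd ℂ)

variable {n m : ℕ}

/-- `R_X = R + Bᴴ X̄ B`. -/
def Rx (B : Matrix (Fin n) (Fin m) ℂ) (R : Matrix (Fin m) (Fin m) ℂ)
    (X : Matrix (Fin n) (Fin n) ℂ) : Matrix (Fin m) (Fin m) ℂ :=
  R + Bᴴ * mconj X * B

/-- The CDARE operator `R(X) = Aᴴ X̄ A − Aᴴ X̄ B R_X⁻¹ Bᴴ X̄ A + H`. -/
def Ric (A : Matrix (Fin n) (Fin n) ℂ) (B : Matrix (Fin n) (Fin m) ℂ)
    (R : Matrix (Fin m) (Fin m) ℂ) (H X : Matrix (Fin n) (Fin n) ℂ) :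
    Matrix (Fin n) (Fin n) ℂ :=
  Aᴴ * mconj X * A - Aᴴ * mconj X * B * (Rx B R X)⁻¹ * (Bᴴ * mconj X * A) + H

/-- `F_X = R_X⁻¹ Bᴴ X̄ A`. -/
def Fx (A : Matrix (Fin n) (Fin n) ℂ) (B : Matrix (Fin n) (Fin m) ℂ)
    (R : Matrix (Fin m) (Fin m) ℂ) (X : Matrix (Fin n) (Fin n) ℂ) :
    Matrix (Fin m) (Fin n) ℂ :=
  (Rx B R X)⁻¹ * (Bᴴ * mconj X * A)

/-- `T_X = A − B F_X`. -/
def Tx (A : Matrix (Fin n) (Fin n) ℂ) (B : Matrix (Fin n) (Fin m) ℂ)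
    (R : Matrix (Fin m) (Fin m) ℂ) (X : Matrix (Fin n) (Fin n) ℂ) :
    Matrix (Fin n) (Fin n) ℂ :=
  A - B * Fx A B R X

lemma mconj_sub {k l : ℕ} (M N : Matrix (Fin k) (Fin l) ℂ) :
    mconj (M - N) = mconj M - mconj N :=
  Matrix.map_sub _ (map_sub _) M N

lemma mconj_mul {k l p : ℕ} (M : Matrix (Fin k) (Fin l) ℂ) (N : Matrix (Fin l) (Fin p) ℂ) :
    mconj (M * N) = mconj M * mconj N :=
  Matrix.map_mul

/-- The gain `K` (the paper's `F_H`) enters `Â` and the block `F − K` of `F̂` with opposite signs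
and cancels, so the identity holds for every `K`. -/
theorem Matrix.sub_fromCols_mul_fromRows_eq_sub_mul_sub {α : Type*} [Ring α]
    {ι κ κ' π : Type*} [Fintype ι] [Fintype κ] [Fintype κ']
    (A : Matrix ι ι α) (B : Matrix ι κ α) (F K : Matrix κ ι α)
    (A' : Matrix π ι α) (B' : Matrix π κ' α) (F' : Matrix κ' ι α) :
    (A' * A - A' * B * K) - fromCols B' (A' * B) * fromRows (F' * (A - B * F)) (F - K)
      = (A' - B' * F') * (A - B * F) := by
  rw [fromCols_mul_fromRows]
  simp only [Matrix.sub_mul, Matrix.mul_sub, Matrix.mul_assoc]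
  abel

theorem stmt9_general (n m : ℕ) (A : Matrix (Fin n) (Fin n) ℂ) (B : Matrix (Fin n) (Fin m) ℂ)
    (R : Matrix (Fin m) (Fin m) ℂ) (H : Matrix (Fin n) (Fin n) ℂ)
    (F : Matrix (Fin m) (Fin n) ℂ) :
    (mconj A * A - mconj A * B * (Rx B R H)⁻¹ * (Bᴴ * mconj H * A)) -
        Matrix.fromCols (mconj B) (mconj A * B) *
          Matrix.fromRows (mconj F * (A - B * F)) (F - Fx A B R H)
      = mconj (A - B * F) * (A - B * F) ∧
    ((∀ μ ∈ spectrum ℂ (mconj (A - B * F) * (A - B * F)), ‖μ‖ < 1) →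
      ∃ Fh : Matrix (Fin m ⊕ Fin m) (Fin n) ℂ,
        ∀ μ ∈ spectrum ℂ
          ((mconj A * A - mconj A * B * (Rx B R H)⁻¹ * (Bᴴ * mconj H * A)) -
            Matrix.fromCols (mconj B) (mconj A * B) * Fh), ‖μ‖ < 1) := by
  have hÂ : mconj A * B * (Rx B R H)⁻¹ * (Bᴴ * mconj H * A) = mconj A * B * Fx A B R H := by
    rw [Fx, Matrix.mul_assoc (mconj A * B)]
  have key : (mconj A * A - mconj A * B * (Rx B R H)⁻¹ * (Bᴴ * mconj H * A)) -
        Matrix.fromCols (mconj B) (mconj A * B) *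
          Matrix.fromRows (mconj F * (A - B * F)) (F - Fx A B R H)
      = mconj (A - B * F) * (A - B * F) := by
    rw [hÂ, Matrix.sub_fromCols_mul_fromRows_eq_sub_mul_sub, mconj_sub, mconj_mul]
  exact ⟨key, fun hstable => ⟨_, by rwa [key]⟩⟩

theorem stmt9 (n m : ℕ) (A : Matrix (Fin n) (Fin n) ℂ) (B : Matrix (Fin n) (Fin m) ℂ)
    (R : Matrix (Fin m) (Fin m) ℂ) (H : Matrix (Fin n) (Fin n) ℂ)
    (hR : R.IsHermitian) (hH : H.IsHermitian) (hRH : IsUnit (Rx B R H))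
    (F : Matrix (Fin m) (Fin n) ℂ) :
    (mconj A * A - mconj A * B * (Rx B R H)⁻¹ * (Bᴴ * mconj H * A)) -
        Matrix.fromCols (mconj B) (mconj A * B) *
          Matrix.fromRows (mconj F * (A - B * F)) (F - Fx A B R H)
      = mconj (A - B * F) * (A - B * F) ∧
    ((∀ μ ∈ spectrum ℂ (mconj (A - B * F) * (A - B * F)), ‖μ‖ < 1) →
      ∃ Fh : Matrix (Fin m ⊕ Fin m) (Fin n) ℂ,
        ∀ μ ∈ spectrum ℂ
          ((mconj A * A - mconj A * B * (Rx B R H)⁻¹ * (Bᴴ * mconj H * A)) -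
            Matrix.fromCols (mconj B) (mconj A * B) * Fh), ‖μ‖ < 1) :=
  stmt9_general n m A B R H F
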